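/- arXiv:2104.12010 — 2 statements merged into one kernel-verified Lean document; each statement's English description precedes it below -/
import Mathlib

section
/- Let φ be a signed Radon measure on [-d,0] with Hahn–Jordan decomposition φ = φ⁺ − φ⁻, and suppose φ⁻ ≠ 0 with total mass m = φ⁻([-d,0]) > 0. Then there exists a nonnegative continuous function x₁* on [-d,0] such that ∫_{-d}^0 x₁*(s) dφ(s) < −m/2. -/
/-!
Since `φ⁺ ⟂ φ⁻`, there is a measurable `S` carrying all of `φ⁻` and none of `φ⁺`. Inner regularity
of `φ⁻` gives a compact `K ⊆ S` of almost full `φ⁻`-mass; as `φ⁺ K = 0`, outer regularity of `φ⁺`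
gives an open `U ⊇ K` of small `φ⁺`-mass. A Urysohn function equal to `1` on `K` and `0` off `U`
then integrates to almost `0` against `φ⁺` and to almost `φ⁻ [-d,0]` against `φ⁻`.
-/

open MeasureTheory Set

namespace MeasureTheory

variable {X : Type*} [MeasurableSpace X] {μ ν : Measure X}

lemma integral_le_measureReal {f : X → ℝ} {s : Set X} (hs : μ s ≠ ⊤)
    (hf : ∀ x ∈ s, f x ≤ 1) (h'f : ∀ x ∈ sᶜ, f x ≤ 0) :
    ∫ x, f x ∂μ ≤ μ.real s :=
  (ENNReal.ofReal_le_iff_le_toReal hs).1 (integral_le_measure hf h'f)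

lemma Integrable.measureReal_le_integral {f : X → ℝ} (hfi : Integrable f μ) (hf : 0 ≤ᵐ[μ] f)
    {s : Set X} (hs : ∀ x ∈ s, 1 ≤ f x) :
    μ.real s ≤ ∫ x, f x ∂μ :=
  ENNReal.toReal_le_of_le_ofReal (integral_nonneg_of_ae hf) (hfi.measure_le_integral hf hs)

variable [TopologicalSpace X] [IsFiniteMeasure ν]

lemma Measure.MutuallySingular.exists_isCompact_subset_isOpen [μ.OuterRegular]
    [ν.InnerRegularCompactLTTop] (h : μ ⟂ₘ ν) {ε : ℝ} (hε : 0 < ε) :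
    ∃ K U, IsCompact K ∧ IsOpen U ∧ K ⊆ U ∧ μ.real U < ε ∧ ν.real univ < ν.real K + ε := by
  obtain ⟨S, hS, hμS, hνS⟩ := h
  obtain ⟨K, hKS, hK, hνK⟩ :=
    hS.exists_isCompact_lt_add (measure_ne_top ν S) (ENNReal.ofReal_pos.2 hε).ne'
  have hμK : μ K < ENNReal.ofReal ε := by
    rw [measure_mono_null hKS hμS]
    exact ENNReal.ofReal_pos.2 hε
  obtain ⟨U, hKU, hU, hμU⟩ := K.exists_isOpen_lt_of_lt _ hμK
  refine ⟨K, U, hK, hU, hKU, ENNReal.toReal_lt_of_lt_ofReal hμU, ?_⟩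
  have hνS_univ : ν.real S = ν.real univ := by
    rw [← measureReal_add_measureReal_compl hS, measureReal_def ν Sᶜ, hνS,
      ENNReal.toReal_zero, add_zero]
  rw [← ofReal_measureReal (measure_ne_top ν K), ← ENNReal.ofReal_add measureReal_nonneg hε.le]
    at hνK
  exact hνS_univ ▸ ENNReal.toReal_lt_of_lt_ofReal hνK

variable [OpensMeasurableSpace X] [RegularSpace X] [LocallyCompactSpace X]

theorem Measure.MutuallySingular.exists_continuous_integral_sub_integral_lt [IsFiniteMeasure μ]
    [μ.OuterRegular]
    [ν.InnerRegularCompactLTTop] (h : μ ⟂ₘ ν) {ε : ℝ} (hε : 0 < ε) :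
    ∃ f : C(X, ℝ), (∀ x, f x ∈ Icc (0 : ℝ) 1) ∧
      ∫ x, f x ∂μ - ∫ x, f x ∂ν < ε - ν.real univ := by
  obtain ⟨K, U, hK, hU, hKU, hμU, hνK⟩ := h.exists_isCompact_subset_isOpen (half_pos hε)
  obtain ⟨f, hfK, hfU, hf_supp, hf01⟩ := exists_continuous_one_zero_of_isCompact hK
    hU.isClosed_compl (disjoint_compl_right_iff_subset.2 hKU)
  have hμf : ∫ x, f x ∂μ ≤ μ.real U :=
    integral_le_measureReal (measure_ne_top μ U) (fun x _ ↦ (hf01 x).2)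
      (fun x hx ↦ (hfU hx).le)
  have hνf : ν.real K ≤ ∫ x, f x ∂ν :=
    (f.continuous.integrable_of_hasCompactSupport hf_supp).measureReal_le_integral
      (ae_of_all _ fun x ↦ (hf01 x).1) (fun x hx ↦ (hfK hx).ge)
  exact ⟨f, hf01, by linarith⟩

end MeasureTheory

theorem stmt0_general (d : ℝ)
    (φ : SignedMeasure (Set.Icc (-d) (0:ℝ)))
    (m : ℝ) (hm : m = (φ.toJordanDecomposition.negPart Set.univ).toReal)
    (hmpos : 0 < m) :
    ∃ x : C(Set.Icc (-d) (0:ℝ), ℝ), (∀ t, 0 ≤ x t) ∧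
      ((∫ t, x t ∂φ.toJordanDecomposition.posPart) -
        ∫ t, x t ∂φ.toJordanDecomposition.negPart) < -(m / 2) := by
  obtain ⟨x, hx01, hx⟩ :=
    φ.toJordanDecomposition.mutuallySingular.exists_continuous_integral_sub_integral_lt
      (half_pos hmpos)
  refine ⟨x, fun t ↦ (hx01 t).1, ?_⟩
  rw [measureReal_def, ← hm] at hx
  linarith

/-- If the negative part of the Hahn–Jordan decomposition of a signed
Radon measure `φ` on `[-d,0]` is nonzero with total mass `m > 0`, then there is a
nonnegative continuous function `x₁*` with `∫ x₁* dφ < -m/2`. -/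
theorem stmt0 (d : ℝ) (hd : 0 < d)
    (φ : SignedMeasure (Set.Icc (-d) (0:ℝ)))
    (hneg : φ.toJordanDecomposition.negPart ≠ 0)
    (m : ℝ) (hm : m = (φ.toJordanDecomposition.negPart Set.univ).toReal)
    (hmpos : 0 < m) :
    ∃ x : C(Set.Icc (-d) (0:ℝ), ℝ), (∀ t, 0 ≤ x t) ∧
      ((∫ t, x t ∂φ.toJordanDecomposition.posPart) -
        ∫ t, x t ∂φ.toJordanDecomposition.negPart) < -(m / 2) :=
  stmt0_general d φ m hm hmpos
end

section
/- Let E(t) > 0 and y(t) be continuous functions on [0,∞) with y(t) = E(t)(x₀ + I(t)), where I(t) = ∫_0^t E(u)⁻¹ (∫_{-d}^0 y(u+s) dφ(s)) du, x₀ > 0, y(s) = x₁(s) ≥ 0 for s ∈ [-d,0), and φ a nonnegative finite Borel measure on [-d,0]. Then y(t) > 0 for all t ≥ 0. -/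
open MeasureTheory intervalIntegral Set

/-! Let `T` be the first point where `y ≤ 0` on `[0, ∞)`; it exists because `y` is continuous there.
On `[-d, T)` the path is nonnegative, so the delay integral `∫ y(u + s) dφ(s)` is nonnegative
for almost every `u ∈ [0, T]`, hence `I(T) ≥ 0` and `y(T) ≥ E(T) x₀ > 0`, a contradiction. -/

theorem ContinuousOn.forall_pos_of_forall_Ico_imp {α : Type*} [ConditionallyCompleteLinearOrder α]
    [TopologicalSpace α] [OrderTopology α] {a : α} {y : α → ℝ}
    (hy : ContinuousOn y (Ici a)) (step : ∀ T ≥ a, (∀ u ∈ Ico a T, 0 < y u) → 0 < y T) :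
    ∀ t ≥ a, 0 < y t := by
  by_contra! ⟨t, ht, hyt⟩
  set S := Ici a ∩ y ⁻¹' Iic 0
  have hbdd : BddBelow S := ⟨a, fun _ hx => hx.1⟩
  have hT : sInf S ∈ S :=
    (hy.preimage_isClosed_of_isClosed isClosed_Ici isClosed_Iic).csInf_mem ⟨t, ht, hyt⟩ hbdd
  refine (step _ hT.1 fun u hu => ?_).not_ge hT.2
  exact lt_of_not_ge fun hyu => (csInf_le hbdd ⟨hu.1, hyu⟩).not_gt hu.2

theorem integral_shift_nonneg {d T u : ℝ} (φ : Measure (Icc (-d) (0:ℝ))) {y : ℝ → ℝ}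
    (hy : ∀ v ∈ Ico (-d) T, 0 ≤ y v) (hu₀ : 0 ≤ u) (huT : u < T) :
    0 ≤ ∫ s : Icc (-d) (0:ℝ), y (u + s) ∂φ :=
  integral_nonneg fun s => hy _ ⟨by linarith [s.2.1], by linarith [s.2.2]⟩

theorem stmt16_general (d x₀ : ℝ) (hx₀ : 0 < x₀)
    (φ : Measure (Set.Icc (-d) (0:ℝ)))
    (E y : ℝ → ℝ)
    (hyc : ContinuousOn y (Set.Ici 0))
    (hEpos : ∀ t ≥ (0:ℝ), 0 < E t)
    (hpast : ∀ s ∈ Set.Ico (-d) (0:ℝ), 0 ≤ y s)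
    (hrep : ∀ t ≥ (0:ℝ), y t = E t * (x₀ +
      ∫ u in (0:ℝ)..t, (E u)⁻¹ * ∫ s : Set.Icc (-d) (0:ℝ), y (u + (s:ℝ)) ∂φ)) :
    ∀ t ≥ (0:ℝ), 0 < y t := by
  refine hyc.forall_pos_of_forall_Ico_imp fun T hT hpos => ?_
  have hy : ∀ v ∈ Ico (-d) T, 0 ≤ y v := fun v hv =>
    (lt_or_ge v 0).elim (fun h => hpast v ⟨hv.1, h⟩) fun h => (hpos v ⟨h, hv.2⟩).le
  have hI : 0 ≤ ∫ u in (0:ℝ)..T, (E u)⁻¹ * ∫ s : Icc (-d) (0:ℝ), y (u + (s:ℝ)) ∂φ := by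
    -- at `u = T` the integrand involves `y T` itself, so the endpoint is discarded
    rw [integral_of_le hT, integral_Ioc_eq_integral_Ioo]
    exact setIntegral_nonneg measurableSet_Ioo fun u hu =>
      mul_nonneg (inv_nonneg.2 (hEpos u hu.1.le).le) (integral_shift_nonneg φ hy hu.1.le hu.2)
  rw [hrep T hT]
  exact mul_pos (hEpos T hT) (by linarith)

/-- positivity of labor income under a nonnegative delay measure, via
the variation-of-constants representation `y(t) = E(t)(x₀ + I(t))` with
`I(t) = ∫_0^t E(u)⁻¹ (∫_{-d}^0 y(u+s) dφ(s)) du`, `x₀ > 0`, nonnegative past path,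
and `φ ≥ 0`: then `y(t) > 0` for all `t ≥ 0`. -/
theorem stmt16 (d x₀ : ℝ) (hd : 0 < d) (hx₀ : 0 < x₀)
    (φ : Measure (Set.Icc (-d) (0:ℝ))) [IsFiniteMeasure φ]
    (E y : ℝ → ℝ)
    (hEc : ContinuousOn E (Set.Ici 0)) (hyc : ContinuousOn y (Set.Ici 0))
    (hEpos : ∀ t ≥ (0:ℝ), 0 < E t)
    (hpast : ∀ s ∈ Set.Ico (-d) (0:ℝ), 0 ≤ y s)
    (hrep : ∀ t ≥ (0:ℝ), y t = E t * (x₀ +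
      ∫ u in (0:ℝ)..t, (E u)⁻¹ * ∫ s : Set.Icc (-d) (0:ℝ), y (u + (s:ℝ)) ∂φ)) :
    ∀ t ≥ (0:ℝ), 0 < y t :=
  stmt16_general d x₀ hx₀ φ E y hyc hEpos hpast hrep
end
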